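/- Let G be a finite abelian group. In the additive monoid ℕ₀^λ, where λ is the number of minimal zero-sum sequences U₁,…,U_λ over G of length D(G), the set H consisting of 0 together with all tuples (k₁,…,k_λ) such that ρ(L(∏ Uᵢ^{kᵢ})) = D(G)/2 is a saturated submonoid of (ℕ₀^λ, +), hence finitely generated. -/

import Mathlib

/-!
Every atom has length at most `D = D(G)`, so for `A = ∏ Uᵢ^{kᵢ}` the minimum of `L(A)` is
`|k| = ∑ kᵢ`, and, as long as `0 ∉ A`, the maximum is at most `|A| / 2 = |k| D / 2`. Hence
`ρ(L(A)) = D / 2` exactly when `A` factors into atoms of length `2`, that is, when `A` is invariant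
under `g ↦ -g` and every element of order `2` occurs an even number of times. This condition
survives cancellation, so `H` is the preimage of a subtractive submonoid of `ℕ₀^λ`, which is
finitely generated by Dickson's lemma.
-/

def IsMinZS {G : Type*} [AddCommGroup G] (U : Multiset G) : Prop :=
  U ≠ 0 ∧ U.sum = 0 ∧ ∀ V ≤ U, V ≠ 0 → V.sum = 0 → V = U

noncomputable def DavC (G : Type*) [AddCommGroup G] : ℕ :=
  sSup {n | ∃ U : Multiset G, IsMinZS U ∧ U.card = n}

def LSet {G : Type*} [AddCommGroup G] (A : Multiset G) : Set ℕ :=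
  {k | ∃ l : Multiset (Multiset G), l.card = k ∧ (∀ U ∈ l, IsMinZS U) ∧ l.sum = A}

noncomputable def rhoSet (L : Set ℕ) : ℚ := ((sSup L : ℕ) : ℚ) / ((sInf L : ℕ) : ℚ)

def IsIntervalSet (L : Set ℕ) : Prop := L.Nonempty ∧ L = Set.Icc (sInf L) (sSup L)

open Multiset

section MinimalZeroSum

variable {G : Type*} [AddCommGroup G]

lemma IsMinZS.eq_singleton_zero {U : Multiset G} (hU : IsMinZS U) (h0 : (0 : G) ∈ U) :
    U = {0} :=
  (hU.2.2 {0} (singleton_le.2 h0) (by simp) (by simp)).symm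

lemma IsMinZS.zero_notMem {U : Multiset G} (hU : IsMinZS U) (h2 : 2 ≤ card U) :
    (0 : G) ∉ U := fun h0 => by
  simp [hU.eq_singleton_zero h0] at h2

lemma IsMinZS.two_le_card {U : Multiset G} (hU : IsMinZS U) (h0 : (0 : G) ∉ U) :
    2 ≤ card U := by
  by_contra! h
  interval_cases hc : card U
  · exact hU.1 (card_eq_zero.1 hc)
  · obtain ⟨x, rfl⟩ := card_eq_one.1 hc
    exact h0 (by simpa [eq_comm] using hU.2.1)

lemma isMinZS_pair {g : G} (hg : g ≠ 0) : IsMinZS {g, -g} := by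
  refine ⟨by simp, by simp, fun V hV hV0 hVsum => eq_of_le_of_card_le hV ?_⟩
  have hV1 : card V ≠ 1 := fun h => by
    obtain ⟨x, rfl⟩ := card_eq_one.1 h
    obtain rfl : x = 0 := by simpa using hVsum
    exact hg (by simpa [eq_comm] using hV)
  have := card_pos.2 hV0
  simp only [insert_eq_cons, card_cons, card_singleton]
  omega

lemma IsMinZS.exists_eq_pair {U : Multiset G} (hU : IsMinZS U) (h2 : card U = 2) :
    ∃ g, U = {g, -g} := by
  obtain ⟨a, b, rfl⟩ := card_eq_two.1 h2
  exact ⟨a, by rw [eq_neg_of_add_eq_zero_right (a := a) (b := b) (by simpa using hU.2.1)]⟩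

end MinimalZeroSum

section Balanced

variable {G : Type*} [AddCommGroup G] [DecidableEq G]

def IsBalanced (C : Multiset G) : Prop :=
  C.map Neg.neg = C ∧ ∀ g : G, -g = g → Even (C.count g)

lemma isBalanced_zero : IsBalanced (0 : Multiset G) := ⟨rfl, by simp⟩

lemma isBalanced_pair (g : G) : IsBalanced {g, -g} := by
  refine ⟨by simpa using pair_comm (-g) g, fun x hx => ?_⟩
  have : (x = -g) ↔ (x = g) := by rw [← hx, neg_inj, hx]
  simp only [insert_eq_cons, count_cons, count_singleton, this]
  split_ifs <;> simp

lemma IsBalanced.add {A C : Multiset G} (hA : IsBalanced A) (hC : IsBalanced C) :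
    IsBalanced (A + C) :=
  ⟨by rw [map_add, hA.1, hC.1], fun g hg => by simpa using (hA.2 g hg).add (hC.2 g hg)⟩

lemma IsBalanced.of_add_left {A C : Multiset G} (hA : IsBalanced A) (hAC : IsBalanced (A + C)) :
    IsBalanced C := by
  refine ⟨add_left_cancel (a := A) ?_, fun g hg => ?_⟩
  · rw [← hAC.1, map_add, hA.1]
  · have := hAC.2 g hg
    rw [count_add, Nat.even_add] at this
    exact this.1 (hA.2 g hg)

lemma IsBalanced.exists_eq_pair_add {C : Multiset G} (hC : IsBalanced C) {g : G} (hg : g ∈ C) :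
    ∃ C', C = {g, -g} + C' := by
  obtain ⟨C₁, rfl⟩ := exists_cons_of_mem hg
  have hneg : -g ∈ C₁ := by
    by_cases hgg : -g = g
    · have hodd := hC.2 g hgg
      rw [count_cons_self, Nat.even_add_one] at hodd
      rw [hgg, ← count_ne_zero]
      exact fun h => hodd (h ▸ Even.zero)
    · have : -g ∈ g ::ₘ C₁ := hC.1 ▸ mem_map_of_mem _ (mem_cons_self g C₁)
      exact (mem_cons.1 this).resolve_left hgg
  obtain ⟨C', rfl⟩ := exists_cons_of_mem hneg
  exact ⟨C', by simp⟩

end Balanced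

section PairFactorable

variable {G : Type*} [AddCommGroup G]

variable (G) in
def pairFactorable : AddSubmonoid (Multiset G) :=
  AddSubmonoid.closure {V | IsMinZS V ∧ card V = 2}

lemma mem_pairFactorable_iff_exists {C : Multiset G} :
    C ∈ pairFactorable G ↔
      ∃ l : Multiset (Multiset G), (∀ V ∈ l, IsMinZS V ∧ card V = 2) ∧ l.sum = C :=
  ⟨AddSubmonoid.exists_multiset_of_mem_closure, fun ⟨l, hl, hC⟩ =>
    hC ▸ AddSubmonoid.multiset_sum_mem _ l fun V hV => AddSubmonoid.subset_closure (hl V hV)⟩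

lemma pair_mem_pairFactorable {g : G} (hg : g ≠ 0) : {g, -g} ∈ pairFactorable G :=
  AddSubmonoid.subset_closure ⟨isMinZS_pair hg, by simp⟩

lemma mem_pairFactorable_iff [DecidableEq G] {C : Multiset G} :
    C ∈ pairFactorable G ↔ (0 : G) ∉ C ∧ IsBalanced C := by
  constructor
  · intro hC
    induction hC using AddSubmonoid.closure_induction with
    | mem V hV =>
      obtain ⟨g, rfl⟩ := hV.1.exists_eq_pair hV.2
      exact ⟨hV.1.zero_notMem hV.2.ge, isBalanced_pair g⟩
    | zero => exact ⟨notMem_zero 0, isBalanced_zero⟩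
    | add A C _ _ hA hC => exact ⟨by simp [hA.1, hC.1], hA.2.add hC.2⟩
  · rintro ⟨h0, hC⟩
    induction C using strongInductionOn with
    | ih C ih =>
    rcases empty_or_exists_mem C with rfl | ⟨g, hg⟩
    · exact zero_mem _
    obtain ⟨C', rfl⟩ := hC.exists_eq_pair_add hg
    have hg0 : g ≠ 0 := by rintro rfl; exact h0 hg
    have hlt : C' < {g, -g} + C' := lt_add_of_pos_left _ (bot_lt_iff_ne_bot.2 (by simp))
    exact add_mem (pair_mem_pairFactorable hg0) (ih C' hlt
      (fun h => h0 (mem_add.2 (Or.inr h))) ((isBalanced_pair g).of_add_left hC))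

lemma mem_pairFactorable_of_add_mem {A C : Multiset G} (hA : A ∈ pairFactorable G)
    (hAC : A + C ∈ pairFactorable G) : C ∈ pairFactorable G := by
  classical
  rw [mem_pairFactorable_iff] at *
  exact ⟨fun h => hAC.1 (mem_add.2 (Or.inr h)), hA.2.of_add_left hAC.2⟩

end PairFactorable

section Lengths

variable {α : Type*}

lemma card_multisetSum (l : Multiset (Multiset α)) : card l.sum = (l.map card).sum :=
  card_join l

lemma mul_le_card_sum {l : Multiset (Multiset α)} {c : ℕ} (h : ∀ V ∈ l, c ≤ card V) :
    card l * c ≤ card l.sum := by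
  simpa [card_multisetSum] using card_nsmul_le_sum (s := l.map card) (a := c) (by simpa using h)

lemma card_sum_le_mul {l : Multiset (Multiset α)} {c : ℕ} (h : ∀ V ∈ l, card V ≤ c) :
    card l.sum ≤ card l * c := by
  simpa [card_multisetSum] using sum_le_card_nsmul (l.map card) c (by simpa using h)

variable {G : Type*} [AddCommGroup G]

lemma le_card_of_mem_LSet {A : Multiset G} {m : ℕ} (hm : m ∈ LSet A) : m ≤ card A := by
  obtain ⟨l, rfl, hl, rfl⟩ := hm
  simpa using mul_le_card_sum fun V hV => card_pos.2 (hl V hV).1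

lemma bddAbove_LSet (A : Multiset G) : BddAbove (LSet A) :=
  ⟨card A, fun _ => le_card_of_mem_LSet⟩

-- `sSup` of an unbounded set of naturals is `0`, so `0 < DavC G` says that the lengths are bounded.
lemma IsMinZS.card_le_davC {U : Multiset G} (hD : 0 < DavC G) (hU : IsMinZS U) :
    card U ≤ DavC G :=
  le_csSup (not_not.1 fun h => hD.ne' (Nat.sSup_of_not_bddAbove h)) ⟨U, hU, rfl⟩

lemma card_le_mul_davC_of_mem_LSet {A : Multiset G} {m : ℕ} (hD : 0 < DavC G)
    (hm : m ∈ LSet A) : card A ≤ m * DavC G := by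
  obtain ⟨l, rfl, hl, rfl⟩ := hm
  exact card_sum_le_mul fun V hV => (hl V hV).card_le_davC hD

lemma two_mul_le_card_of_mem_LSet {A : Multiset G} {m : ℕ} (h0 : (0 : G) ∉ A)
    (hm : m ∈ LSet A) : 2 * m ≤ card A := by
  obtain ⟨l, rfl, hl, rfl⟩ := hm
  rw [mul_comm]
  exact mul_le_card_sum fun V hV =>
    (hl V hV).two_le_card fun hV0 => h0 (mem_of_le (le_sum_of_mem hV) hV0)

lemma mem_pairFactorable_iff_exists_mem_LSet [DecidableEq G] {A : Multiset G} :
    A ∈ pairFactorable G ↔ (0 : G) ∉ A ∧ ∃ m ∈ LSet A, card A ≤ 2 * m := by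
  refine ⟨fun hA => ⟨(mem_pairFactorable_iff.1 hA).1, ?_⟩, fun ⟨h0, m, hm, hle⟩ => ?_⟩
  · obtain ⟨l, hl, rfl⟩ := mem_pairFactorable_iff_exists.1 hA
    refine ⟨card l, ⟨l, rfl, fun V hV => (hl V hV).1, rfl⟩, ?_⟩
    rw [mul_comm]
    exact card_sum_le_mul fun V hV => (hl V hV).2.le
  · obtain ⟨l, rfl, hl, rfl⟩ := hm
    refine mem_pairFactorable_iff_exists.2 ⟨l, fun V hV => ⟨hl V hV, ?_⟩, rfl⟩
    have h2 : ∀ W ∈ l, 2 ≤ card W := fun W hW =>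
      (hl W hW).two_le_card fun hW0 => h0 (mem_of_le (le_sum_of_mem hW) hW0)
    -- a single atom longer than 2 would push `card A` above `2 * card l`
    by_contra hV2
    have := sum_lt_sum (f := fun _ => 2) (g := card) h2 ⟨V, hV, (h2 V hV).lt_of_ne' hV2⟩
    simp [← card_multisetSum] at this
    omega

end Lengths

lemma rhoSet_LSet_sum_eq_half_iff {G : Type*} [AddCommGroup G] [DecidableEq G]
    {l : Multiset (Multiset G)} (hl : l ≠ 0) (hU : ∀ U ∈ l, IsMinZS U ∧ card U = DavC G) :
    rhoSet (LSet l.sum) = (DavC G : ℚ) / 2 ↔ l.sum ∈ pairFactorable G := by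
  set D := DavC G
  set s := card l
  obtain ⟨U, hUl⟩ := exists_mem_of_ne_zero hl
  have hD : 0 < D := (hU U hUl).2 ▸ card_pos.2 (hU U hUl).1.1
  have hs : 0 < s := card_pos.2 hl
  have hcard : card l.sum = s * D := by
    rw [card_multisetSum, map_congr rfl fun V hV => (hU V hV).2, map_const', sum_replicate,
      smul_eq_mul]
  have hsL : s ∈ LSet l.sum := ⟨l, rfl, fun V hV => (hU V hV).1, rfl⟩
  have hinf : sInf (LSet l.sum) = s := le_antisymm (Nat.sInf_le hsL) <| le_csInf ⟨s, hsL⟩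
    fun m hm => Nat.le_of_mul_le_mul_right (hcard ▸ card_le_mul_davC_of_mem_LSet hD hm) hD
  set M := sSup (LSet l.sum)
  have hM : M ∈ LSet l.sum := Nat.sSup_mem ⟨s, hsL⟩ (bddAbove_LSet _)
  have hsM : s ≤ M := le_csSup (bddAbove_LSet _) hsL
  have hρ : rhoSet (LSet l.sum) = (D : ℚ) / 2 ↔ 2 * M = s * D := by
    rw [rhoSet, hinf, div_eq_div_iff (by positivity) two_ne_zero]
    norm_cast
    rw [mul_comm M, mul_comm D]
  rw [hρ, mem_pairFactorable_iff_exists_mem_LSet, hcard]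
  refine ⟨fun h => ⟨fun h0 => ?_, M, hM, h.ge⟩, fun ⟨h0, m, hm, hle⟩ => ?_⟩
  · -- an atom containing `0` is `{0}`, so `D = 1` and `2 * M = s ≤ M`
    obtain ⟨V, hVl, hV0⟩ := mem_join.1 h0
    have hD1 : D = 1 := by rw [← (hU V hVl).2, (hU V hVl).1.eq_singleton_zero hV0, card_singleton]
    rw [hD1, mul_one] at h
    omega
  · have := two_mul_le_card_of_mem_LSet h0 hM
    have := le_csSup (bddAbove_LSet _) hm
    omega

theorem stmt4_general {G : Type*} [AddCommGroup G] (lam : ℕ)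
    (U : Fin lam → Multiset G)
    (hrange : Set.range U = {W : Multiset G | IsMinZS W ∧ W.card = DavC G}) :
    ∀ H : Set (Fin lam → ℕ),
      H = {k | k = 0 ∨ rhoSet (LSet (∑ i, k i • U i)) = (DavC G : ℚ) / 2} →
      (0 ∈ H) ∧ (∀ x ∈ H, ∀ y ∈ H, x + y ∈ H) ∧
      (∀ x ∈ H, ∀ y ∈ H, (∀ i, x i ≤ y i) → y - x ∈ H) ∧
      ∃ S : Finset (Fin lam → ℕ), (S : Set (Fin lam → ℕ)) ⊆ H ∧
        H ⊆ (AddSubmonoid.closure (S : Set (Fin lam → ℕ)) : Set (Fin lam → ℕ)) := by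
  intro H hH
  classical
  have hU : ∀ i, IsMinZS (U i) ∧ card (U i) = DavC G := fun i => hrange.subset ⟨i, rfl⟩
  let f := (Fintype.linearCombination ℕ U).toAddMonoidHom
  let P := (pairFactorable G).comap f
  have hHP : H = P := by
    subst hH
    ext k
    change _ ↔ ∑ i, k i • U i ∈ pairFactorable G
    rcases eq_or_ne k 0 with rfl | hk
    · simp
    · obtain ⟨i, hi⟩ := Function.ne_iff.1 hk
      have hl : ∑ i, k i • ({U i} : Multiset (Multiset G)) ≠ 0 := by simpa using ⟨i, hi⟩
      have := rhoSet_LSet_sum_eq_half_iff hl fun V hV => by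
        obtain ⟨j, -, hj⟩ := mem_sum.1 hV
        rw [mem_singleton.1 (mem_of_mem_nsmul hj)]
        exact hU j
      simpa [hk, sum_sum, nsmul_singleton] using this
  have hsub : ∀ x ∈ P, ∀ y, x + y ∈ P → y ∈ P := fun x hx y hxy =>
    mem_pairFactorable_of_add_mem hx (by rw [← _root_.map_add]; exact hxy)
  subst hHP
  refine ⟨P.zero_mem, fun x hx y hy => P.add_mem hx hy,
    fun x hx y hy hxy => hsub x hx _ (by rwa [add_tsub_cancel_of_le hxy]), ?_⟩
  obtain ⟨S, hS⟩ := AddSubmonoid.fg_of_subtractive hsub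
  exact ⟨S, hS ▸ AddSubmonoid.subset_closure, hS.ge⟩

theorem stmt4 {G : Type*} [AddCommGroup G] [Fintype G] (lam : ℕ)
    (U : Fin lam → Multiset G) (hUinj : Function.Injective U)
    (hrange : Set.range U = {W : Multiset G | IsMinZS W ∧ W.card = DavC G}) :
    ∀ H : Set (Fin lam → ℕ),
      H = {k | k = 0 ∨ rhoSet (LSet (∑ i, k i • U i)) = (DavC G : ℚ) / 2} →
      (0 ∈ H) ∧ (∀ x ∈ H, ∀ y ∈ H, x + y ∈ H) ∧
      (∀ x ∈ H, ∀ y ∈ H, (∀ i, x i ≤ y i) → y - x ∈ H) ∧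
      ∃ S : Finset (Fin lam → ℕ), (S : Set (Fin lam → ℕ)) ⊆ H ∧
        H ⊆ (AddSubmonoid.closure (S : Set (Fin lam → ℕ)) : Set (Fin lam → ℕ)) :=
  stmt4_general lam U hrange
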